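/- arXiv:1907.04220 — 3 statements merged into one kernel-verified Lean document; each statement's English description precedes it below -/
import Mathlib

section
/- Let μ > 0, σ > 0 and let 0 < p < μ. Then the bound max{ 1 + σ²/(μ−p)², μ/p + σ²/(p(μ−p)) } on the ratio OPT(F)/REV(p;F) over F ∈ 𝔽_{μ,σ} is tight: for every ε > 0 there exists a two-point mass distribution F with mean μ and variance exactly σ² such that OPT(F) ≥ ( max{ 1 + σ²/(μ−p)², μ/p + σ²/(p(μ−p)) } − ε ) · REV(p;F). (Such F are obtained as F_x placing mass σ²/(σ²+(μ−x)²) at x and the remaining mass at μ + σ²/(μ−x), with x → p⁻.) -/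
open MeasureTheory

/-- Revenue of posting price `p` against valuation distribution `F`:
`REV(p;F) = p · P(X ≥ p)`. -/
noncomputable def rev (F : Measure ℝ) (p : ℝ) : ℝ :=
  p * (F (Set.Ici p)).toReal

/-- Optimal revenue `OPT(F) = sup_{p ≥ 0} p · P(X ≥ p)`. -/
noncomputable def opt (F : Measure ℝ) : ℝ :=
  ⨆ p ∈ Set.Ici (0 : ℝ), rev F p

/-- Revenue of a randomized pricing mechanism `A` (a measure over prices):
`REV(A;F) = E_{p∼A}[REV(p;F)]`. -/
noncomputable def mrev (A F : Measure ℝ) : ℝ :=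
  ∫ p, rev F p ∂A

/-- `F` is a `(μ,σ)`-distributed distribution: a probability measure on `[0,∞)`
with mean `m` and variance at most `s²`. -/
structure MeanVarLe (F : Measure ℝ) (m s : ℝ) : Prop where
  prob : IsProbabilityMeasure F
  supp : F (Set.Iio 0) = 0
  int_mean : Integrable (fun x => x) F
  int_sq : Integrable (fun x => x ^ 2) F
  mean : ∫ x, x ∂F = m
  var_le : ∫ x, (x - m) ^ 2 ∂F ≤ s ^ 2

/-- A randomized pricing mechanism: a probability measure over prices in `[0,∞)`. -/
def IsPriceMech (A : Measure ℝ) : Prop :=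
  IsProbabilityMeasure A ∧ A (Set.Iio 0) = 0

/-- A two-point mass distribution with mean `m` and variance exactly `s²`:
mass `α` at `x` and mass `1−α` at `y`, with `0 ≤ x < y`, `αx + (1−α)y = m` and
`αx² + (1−α)y² = m² + s²`. -/
def IsTwoPoint (F : Measure ℝ) (m s : ℝ) : Prop :=
  ∃ x y α : ℝ, 0 ≤ x ∧ x < y ∧ 0 ≤ α ∧ α ≤ 1 ∧
    α * x + (1 - α) * y = m ∧ α * x ^ 2 + (1 - α) * y ^ 2 = m ^ 2 + s ^ 2 ∧
    F = ENNReal.ofReal α • Measure.dirac x + ENNReal.ofReal (1 - α) • Measure.dirac y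

/-! The distribution with mass `σ²/(σ²+(μ-x)²)` at `x < p` and the rest at `y = μ + σ²/(μ-x)`
has mean `μ` and variance `σ²`. The price `p` only sells at `y`, earning
`p(μ-x)²/(σ²+(μ-x)²)`, while the prices `x` and `y` earn `x` and `y(μ-x)²/(σ²+(μ-x)²)`. The two
resulting ratios are continuous in `x` and equal the two terms of the bound at `x = p`, so
letting `x → p⁻` brings their maximum within `ε` of the bound. -/

open Filter Topology Set

lemma rev_le_integral_posPart {F : Measure ℝ} (hF : Integrable (fun x => x) F) {q : ℝ}
    (hq : 0 ≤ q) : rev F q ≤ ∫ x, max x 0 ∂F := by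
  rcases hq.eq_or_lt with rfl | hq
  · simpa [rev] using integral_nonneg fun x => le_max_right x 0
  have hset : {x : ℝ | q ≤ max x 0} = Ici q := by
    ext x; simp [hq.not_ge]
  have h := mul_meas_ge_le_integral_of_nonneg (ae_of_all _ fun x => le_max_right x 0) hF.pos_part q
  rwa [hset, measureReal_def] at h

-- `opt` is a supremum in `ℝ` (junk `0` when unbounded); Markov bounds `rev` by `E[X⁺]`.
lemma rev_le_opt {F : Measure ℝ} (hF : Integrable (fun x => x) F) {q : ℝ} (hq : 0 ≤ q) :
    rev F q ≤ opt F := by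
  have hbdd : BddAbove (range fun q : ℝ => ⨆ _ : q ∈ Ici (0 : ℝ), rev F q) := by
    refine ⟨max (∫ x, max x 0 ∂F) 0, forall_mem_range.2 fun q => ?_⟩
    by_cases hq : q ∈ Ici (0 : ℝ)
    · rw [ciSup_pos hq]; exact le_max_of_le_left (rev_le_integral_posPart hF hq)
    · simp [hq]
  have h := le_ciSup hbdd q
  rwa [ciSup_pos (show q ∈ Ici (0 : ℝ) from hq)] at h

noncomputable def twoPoint (α x y : ℝ) : Measure ℝ :=
  ENNReal.ofReal α • Measure.dirac x + ENNReal.ofReal (1 - α) • Measure.dirac y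

lemma integrable_id_twoPoint (α x y : ℝ) : Integrable (fun z => z) (twoPoint α x y) :=
  ((integrable_dirac (by simp)).smul_measure ENNReal.ofReal_ne_top).add_measure
    ((integrable_dirac (by simp)).smul_measure ENNReal.ofReal_ne_top)

lemma rev_twoPoint_of_le_left {α x y q : ℝ} (hα0 : 0 ≤ α) (hα1 : α ≤ 1) (hqx : q ≤ x)
    (hxy : x ≤ y) : rev (twoPoint α x y) q = q := by
  have : ENNReal.ofReal α + ENNReal.ofReal (1 - α) = 1 := by
    rw [← ENNReal.ofReal_add hα0 (by linarith)]; simp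
  simp [rev, twoPoint, hqx, hqx.trans hxy, this]

lemma rev_twoPoint_of_lt_of_le {α x y q : ℝ} (hα1 : α ≤ 1) (hxq : x < q)
    (hqy : q ≤ y) : rev (twoPoint α x y) q = q * (1 - α) := by
  simp [rev, twoPoint, hxq.not_ge, hqy, sub_nonneg.2 hα1]

noncomputable def extremalTwoPoint (μ σ x : ℝ) : Measure ℝ :=
  twoPoint (σ ^ 2 / (σ ^ 2 + (μ - x) ^ 2)) x (μ + σ ^ 2 / (μ - x))

-- `REV(x)/REV(p)` and `REV(y)/REV(p)` for `extremalTwoPoint μ σ x`, with `y` its upper point.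
noncomputable def tightRatio (μ σ p x : ℝ) : ℝ :=
  max (x * (σ ^ 2 + (μ - x) ^ 2) / (p * (μ - x) ^ 2)) ((μ + σ ^ 2 / (μ - x)) / p)

lemma sq_div_sq_add_sq_le_one (σ : ℝ) {d : ℝ} (hd : d ≠ 0) : σ ^ 2 / (σ ^ 2 + d ^ 2) ≤ 1 :=
  (div_le_one (by positivity)).2 (le_add_of_nonneg_right (sq_nonneg d))

section Extremal

variable {μ σ x : ℝ}

lemma isTwoPoint_extremalTwoPoint (hx0 : 0 ≤ x) (hxμ : x < μ) :
    IsTwoPoint (extremalTwoPoint μ σ x) μ σ := by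
  have hd : 0 < μ - x := sub_pos.2 hxμ
  refine ⟨x, μ + σ ^ 2 / (μ - x), σ ^ 2 / (σ ^ 2 + (μ - x) ^ 2), hx0, ?_, by positivity,
    sq_div_sq_add_sq_le_one σ hd.ne', ?_, ?_, rfl⟩
  · have : 0 ≤ σ ^ 2 / (μ - x) := by positivity
    linarith
  · field_simp; ring
  · field_simp; ring

lemma rev_extremalTwoPoint_left (hxμ : x < μ) : rev (extremalTwoPoint μ σ x) x = x := by
  have hd : 0 < μ - x := sub_pos.2 hxμ
  refine rev_twoPoint_of_le_left (by positivity) (sq_div_sq_add_sq_le_one σ hd.ne') le_rfl ?_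
  have : 0 ≤ σ ^ 2 / (μ - x) := by positivity
  linarith

lemma rev_extremalTwoPoint_of_lt_of_le {q : ℝ} (hxμ : x < μ) (hxq : x < q)
    (hqy : q ≤ μ + σ ^ 2 / (μ - x)) :
    rev (extremalTwoPoint μ σ x) q = q * ((μ - x) ^ 2 / (σ ^ 2 + (μ - x) ^ 2)) := by
  have hd : 0 < μ - x := sub_pos.2 hxμ
  rw [extremalTwoPoint, rev_twoPoint_of_lt_of_le (sq_div_sq_add_sq_le_one σ hd.ne') hxq hqy]
  field_simp
  ring

lemma tightRatio_mul_rev_le_opt {p : ℝ} (hp : 0 < p) (hx0 : 0 ≤ x) (hxp : x < p) (hpμ : p ≤ μ) :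
    tightRatio μ σ p x * rev (extremalTwoPoint μ σ x) p ≤ opt (extremalTwoPoint μ σ x) := by
  have hxμ : x < μ := hxp.trans_le hpμ
  have hd : 0 < μ - x := sub_pos.2 hxμ
  have hμy : μ ≤ μ + σ ^ 2 / (μ - x) := le_add_of_nonneg_right (by positivity)
  have hint := integrable_id_twoPoint (σ ^ 2 / (σ ^ 2 + (μ - x) ^ 2)) x (μ + σ ^ 2 / (μ - x))
  rw [rev_extremalTwoPoint_of_lt_of_le hxμ hxp (hpμ.trans hμy), tightRatio,
    max_mul_of_nonneg _ _ (by positivity)]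
  refine max_le ?_ ?_
  · calc _ = rev (extremalTwoPoint μ σ x) x := by
          rw [rev_extremalTwoPoint_left hxμ]; field_simp
      _ ≤ _ := rev_le_opt hint hx0
  · calc _ = rev (extremalTwoPoint μ σ x) (μ + σ ^ 2 / (μ - x)) := by
          rw [rev_extremalTwoPoint_of_lt_of_le hxμ (hxμ.trans_le hμy) le_rfl]; field_simp
      _ ≤ _ := rev_le_opt hint ((hx0.trans hxμ.le).trans hμy)

lemma tightRatio_self {p : ℝ} (hp : p ≠ 0) (hpμ : p ≠ μ) :
    tightRatio μ σ p p = max (1 + σ ^ 2 / (μ - p) ^ 2) (μ / p + σ ^ 2 / (p * (μ - p))) := by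
  have hd : μ - p ≠ 0 := sub_ne_zero.2 hpμ.symm
  rw [tightRatio]
  congr 1
  · field_simp; ring
  · field_simp

lemma continuousAt_tightRatio {p : ℝ} (hp : p ≠ 0) (hpμ : p ≠ μ) :
    ContinuousAt (tightRatio μ σ p) p := by
  have hd : μ - p ≠ 0 := sub_ne_zero.2 hpμ.symm
  unfold tightRatio
  fun_prop (disch := positivity)

end Extremal

theorem stmt3_general (μ σ p : ℝ) (hp0 : 0 < p) (hpμ : p < μ) :
    ∀ ε : ℝ, 0 < ε → ∃ F : Measure ℝ, IsTwoPoint F μ σ ∧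
      (max (1 + σ ^ 2 / (μ - p) ^ 2) (μ / p + σ ^ 2 / (p * (μ - p))) - ε) * rev F p
        ≤ opt F := by
  intro ε hε
  have hlim : Tendsto (tightRatio μ σ p) (𝓝[<] p)
      (𝓝 (max (1 + σ ^ 2 / (μ - p) ^ 2) (μ / p + σ ^ 2 / (p * (μ - p))))) := by
    rw [← tightRatio_self hp0.ne' hpμ.ne]
    exact (continuousAt_tightRatio hp0.ne' hpμ.ne).tendsto.mono_left nhdsWithin_le_nhds
  obtain ⟨x, hx, hx0, hxp⟩ :=
    ((hlim.eventually (lt_mem_nhds (sub_lt_self _ hε))).and (Ioo_mem_nhdsLT hp0)).exists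
  refine ⟨extremalTwoPoint μ σ x, isTwoPoint_extremalTwoPoint hx0.le (hxp.trans hpμ), ?_⟩
  calc _ ≤ tightRatio μ σ p x * rev (extremalTwoPoint μ σ x) p :=
        mul_le_mul_of_nonneg_right hx.le (mul_nonneg hp0.le ENNReal.toReal_nonneg)
    _ ≤ _ := tightRatio_mul_rev_le_opt hp0 hx0.le hxp hpμ.le

/-- For `μ, σ > 0` and `0 < p < μ`, the bound
`max{1 + σ²/(μ−p)², μ/p + σ²/(p(μ−p))}` on `OPT(F)/REV(p;F)` is tight: for every `ε > 0`
there is a two-point mass distribution `F` with mean `μ` and variance exactly `σ²` such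
that `OPT(F) ≥ (max{…} − ε)·REV(p;F)`. -/
theorem stmt3 (μ σ p : ℝ) (hμ : 0 < μ) (hσ : 0 < σ) (hp0 : 0 < p) (hpμ : p < μ) :
    ∀ ε : ℝ, 0 < ε → ∃ F : Measure ℝ, IsTwoPoint F μ σ ∧
      (max (1 + σ ^ 2 / (μ - p) ^ 2) (μ / p + σ ^ 2 / (p * (μ - p))) - ε) * rev F p
        ≤ opt F :=
  stmt3_general μ σ p hp0 hpμ
end

section
/- Let μ > 0, σ ≥ 0, r = σ/μ, and let ρ(r) be the unique solution ρ ∈ [1,∞) of (2e^{ρ−1}−1)/ρ² = r² + 1. Let (π₁,π₂) be the unique solution with 0 < π₁ ≤ π₂ of π₁(1 + ln(π₂/π₁)) = μ and π₁(2π₂ − π₁) = μ² + σ². Then π₁ = μ/ρ(r), and consequently the log-lottery P^log_{μ,σ} guarantees: for every F ∈ 𝔽_{μ,σ}, REV(P^log_{μ,σ};F) ≥ μ/ρ(r) and hence OPT(F) ≤ ρ(r)·REV(P^log_{μ,σ};F). -/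
open MeasureTheory

/-- The log-lottery `P^log` with parameters `p1 ≤ p2`: the probability measure supported on
`[p1,p2]` whose cdf on `[p1,p2)` is
`x ↦ (p2·ln(x/p1) − (x−p1)) / (p2·ln(p2/p1) − (p2−p1))`
(for `p1 = p2` this is the point mass at `p1`). -/
structure IsLogLottery (A : Measure ℝ) (p1 p2 : ℝ) : Prop where
  prob : IsProbabilityMeasure A
  supp : A (Set.Icc p1 p2) = 1
  cdf : ∀ x ∈ Set.Ico p1 p2,
    A (Set.Iic x) = ENNReal.ofReal
      ((p2 * Real.log (x / p1) - (x - p1)) / (p2 * Real.log (p2 / p1) - (p2 - p1)))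

/-!
Since `π₁ (1 + ln (π₂/π₁)) = μ` gives `e^{μ/π₁ - 1} = π₂/π₁`, the second equation says that `μ/π₁`
solves the equation defining `ρ(r)`. The map `x ↦ (2e^{x-1} - 1)/x²` is strictly increasing on
`[1,∞)` (its derivative has the sign of `e^{x-1}(x-2) + 1 > 0`), hence `ρ = μ/π₁`.

For `π₁ < π₂` the log-lottery has density `(π₂/p - 1)/C` on `(π₁,π₂]`, where
`C = π₂ ln(π₂/π₁) - (π₂ - π₁)`. As `p` times this density is `(π₂ - p)/C`, Fubini writes the
revenue against `F` as `E_F[φ(X)]` with `φ(x) = C⁻¹ ∫_{π₁}^{min(π₂,x)} (π₂ - p) dp`, and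
`φ(x) ≥ ((π₂ - π₁)² - (x - π₂)²)/(2C)`. The expectation of this quadratic is at least
`((π₂ - π₁)² - σ² - (μ - π₂)²)/(2C)`, which the two equations for `π₁, π₂` make equal to `π₁`.
For `π₁ = π₂` we get `σ = 0`, so `F` is the point mass at `μ = π₁`, the price the lottery posts.
Finally `OPT(F) ≤ μ` by Markov's inequality.
-/

open Real Set

theorem exp_sub_one_mul_sub_two_add_one_pos {x : ℝ} (hx : 1 < x) :
    0 < exp (x - 1) * (x - 2) + 1 := by
  have h := add_one_lt_exp (x := -(x - 1)) (by linarith)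
  have hmul : exp (-(x - 1)) * exp (x - 1) = 1 := by rw [← exp_add]; simp
  nlinarith [exp_pos (x - 1)]

theorem strictMonoOn_two_mul_exp_sub_one_div_sq :
    StrictMonoOn (fun x : ℝ => (2 * exp (x - 1) - 1) / x ^ 2) (Ici 1) := by
  refine strictMonoOn_of_deriv_pos (convex_Ici 1) ?_ fun x hx => ?_
  · exact ContinuousOn.div (by fun_prop) (by fun_prop) fun x hx =>
      pow_ne_zero 2 (zero_lt_one.trans_le hx).ne'
  rw [interior_Ici, mem_Ioi] at hx
  have hnum := ((((hasDerivAt_id' x).sub_const 1).exp).const_mul 2).sub_const 1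
  have hden : HasDerivAt (fun x : ℝ => x ^ 2) (2 * x) x := by simpa using hasDerivAt_pow 2 x
  rw [(hnum.fun_div hden (pow_ne_zero 2 (by positivity))).deriv]
  have hnum_deriv : 2 * (exp (x - 1) * 1) * x ^ 2 - (2 * exp (x - 1) - 1) * (2 * x)
      = 2 * x * (exp (x - 1) * (x - 2) + 1) := by ring
  rw [hnum_deriv]
  have := exp_sub_one_mul_sub_two_add_one_pos hx
  positivity

theorem two_mul_exp_sub_one_div_sq_div_eq {μ σ p1 p2 : ℝ} (hμ : μ ≠ 0) (hp1 : 0 < p1)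
    (hp12 : p1 ≤ p2) (heq1 : p1 * (1 + log (p2 / p1)) = μ)
    (heq2 : p1 * (2 * p2 - p1) = μ ^ 2 + σ ^ 2) :
    (2 * exp (μ / p1 - 1) - 1) / (μ / p1) ^ 2 = (σ / μ) ^ 2 + 1 := by
  have hexp : exp (μ / p1 - 1) = p2 / p1 := by
    rw [← heq1, mul_div_cancel_left₀ _ hp1.ne', add_sub_cancel_left,
      exp_log (div_pos (hp1.trans_le hp12) hp1)]
  rw [hexp]
  field_simp
  linear_combination heq2

namespace MeanVarLe

variable {F : Measure ℝ} {m s : ℝ}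

theorem integrable_sub_sq (hF : MeanVarLe F m s) (c : ℝ) :
    Integrable (fun x => (x - c) ^ 2) F := by
  have := hF.prob
  simp_rw [sub_sq']
  exact (hF.int_sq.add (integrable_const _)).sub ((hF.int_mean.const_mul 2).mul_const c)

theorem integral_sub_sq (hF : MeanVarLe F m s) (c : ℝ) :
    ∫ x, (x - c) ^ 2 ∂F = ∫ x, x ^ 2 ∂F - 2 * c * m + c ^ 2 := by
  have := hF.prob
  simp_rw [sub_sq']
  have hsq_add : Integrable (fun x => x ^ 2 + c ^ 2) F := hF.int_sq.add (integrable_const _)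
  rw [integral_sub hsq_add ((hF.int_mean.const_mul 2).mul_const c),
    integral_add hF.int_sq (integrable_const _), integral_mul_const, integral_const_mul, hF.mean]
  simp only [integral_const, probReal_univ, smul_eq_mul, one_mul]
  ring

theorem integral_sub_sq_le (hF : MeanVarLe F m s) (c : ℝ) :
    ∫ x, (x - c) ^ 2 ∂F ≤ s ^ 2 + (m - c) ^ 2 := by
  have := hF.var_le
  rw [hF.integral_sub_sq] at this ⊢
  linarith

theorem measure_Ici_eq_one (hF : MeanVarLe F m 0) : F (Ici m) = 1 := by
  have := hF.prob
  have hzero : (fun x => (x - m) ^ 2) =ᵐ[F] 0 :=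
    (integral_eq_zero_iff_of_nonneg (fun x => sq_nonneg _) (hF.integrable_sub_sq m)).1
      (le_antisymm (by simpa using hF.var_le) (integral_nonneg fun x => sq_nonneg _))
  rw [← measure_univ (μ := F), ← ae_mem_iff_measure_eq measurableSet_Ici.nullMeasurableSet]
  filter_upwards [hzero] with x hx
  exact (sub_eq_zero.1 (pow_eq_zero_iff two_ne_zero |>.1 hx)).ge

theorem opt_le (hF : MeanVarLe F m s) : opt F ≤ m := by
  have hnonneg : 0 ≤ᵐ[F] fun x => x := measure_mono_null (fun x hx => by simpa using hx) hF.supp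
  have hm : 0 ≤ m := hF.mean ▸ integral_nonneg_of_ae hnonneg
  refine Real.iSup_le (fun p => Real.iSup_le (fun _ => ?_) hm) hm
  have := mul_meas_ge_le_integral_of_nonneg hnonneg hF.int_mean p
  rwa [hF.mean] at this

end MeanVarLe

section Tonelli

variable {F : Measure ℝ} [IsFiniteMeasure F] {f : ℝ → ℝ} {a b : ℝ}

theorem integrable_uncurry_indicator_Ici (hf : IntegrableOn f (Ioc a b)) :
    Integrable (Function.uncurry fun p x => (Ici p).indicator (fun _ => f p) x)
      ((volume.restrict (Ioc a b)).prod F) :=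
  (hf.comp_fst F).indicator (measurableSet_le measurable_fst measurable_snd)

theorem setIntegral_indicator_Ici_eq (x : ℝ) :
    ∫ p in Ioc a b, (Ici p).indicator (fun _ => f p) x = ∫ p in Ioc a (min b x), f p := by
  have : (fun p => (Ici p).indicator (fun _ => f p) x) = (Iic x).indicator f := by
    ext p; simp [indicator_apply]
  rw [this, setIntegral_indicator measurableSet_Iic, Ioc_inter_Iic]

theorem integrable_setIntegral_Ioc_min (hf : IntegrableOn f (Ioc a b)) :
    Integrable (fun x => ∫ p in Ioc a (min b x), f p) F := by
  simpa only [Function.uncurry_apply_pair, setIntegral_indicator_Ici_eq] using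
    (integrable_uncurry_indicator_Ici (F := F) hf).integral_prod_right

theorem setIntegral_Ioc_mul_measureReal_Ici (hf : IntegrableOn f (Ioc a b)) :
    ∫ p in Ioc a b, f p * F.real (Ici p) = ∫ x, (∫ p in Ioc a (min b x), f p) ∂F := by
  calc ∫ p in Ioc a b, f p * F.real (Ici p)
      = ∫ p in Ioc a b, ∫ x, (Ici p).indicator (fun _ => f p) x ∂F := by
        simp_rw [integral_indicator_const _ measurableSet_Ici, smul_eq_mul, mul_comm]
    _ = ∫ x, (∫ p in Ioc a b, (Ici p).indicator (fun _ => f p) x) ∂F :=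
        integral_integral_swap (integrable_uncurry_indicator_Ici hf)
    _ = ∫ x, (∫ p in Ioc a (min b x), f p) ∂F := by simp_rw [setIntegral_indicator_Ici_eq]

end Tonelli

theorem sq_sub_sq_div_two_le_setIntegral_Ioc_min {a b : ℝ} (hab : a ≤ b) (x : ℝ) :
    ((b - a) ^ 2 - (x - b) ^ 2) / 2 ≤ ∫ p in Ioc a (min b x), (b - p) := by
  rcases le_or_gt x a with hxa | hax
  · rw [Ioc_eq_empty (by simp [hxa]), Measure.restrict_empty, integral_zero_measure]
    nlinarith
  · have hy : a ≤ min b x := le_min hab hax.le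
    rw [← intervalIntegral.integral_of_le hy,
      intervalIntegral.integral_sub intervalIntegrable_const intervalIntegral.intervalIntegrable_id,
      integral_id, intervalIntegral.integral_const, smul_eq_mul]
    rcases le_total b x with hbx | hxb
    · rw [min_eq_left hbx]; nlinarith
    · rw [min_eq_right hxb]; nlinarith

theorem eq_withDensity_of_cdf {A : Measure ℝ} [IsProbabilityMeasure A] {a b : ℝ} {f : ℝ → ℝ}
    (hf_nonneg : ∀ p ∈ Ioc a b, 0 ≤ f p) (hf : IntegrableOn f (Ioc a b))
    (hsupp : A (Icc a b) = 1)
    (hcdf : ∀ x ∈ Ico a b, A (Iic x) = ENNReal.ofReal (∫ p in Ioc a x, f p))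
    (htotal : ∫ p in Ioc a b, f p = 1) :
    A = (volume.restrict (Ioc a b)).withDensity fun p => ENNReal.ofReal (f p) := by
  refine Measure.ext_of_Iic _ _ fun x => ?_
  have hsub : Ioc a (min b x) ⊆ Ioc a b := Ioc_subset_Ioc_right (min_le_left _ _)
  rw [withDensity_apply _ measurableSet_Iic, Measure.restrict_restrict measurableSet_Iic,
    inter_comm, Ioc_inter_Iic, ← ofReal_integral_eq_lintegral_ofReal (hf.mono_set hsub)
      (ae_restrict_of_forall_mem measurableSet_Ioc fun p hp => hf_nonneg p (hsub hp))]
  rcases lt_or_ge x a with hxa | hax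
  · rw [Ioc_eq_empty (by simp [hxa.le]), Measure.restrict_empty, integral_zero_measure,
      ENNReal.ofReal_zero]
    refine measure_mono_null (t := (Icc a b)ᶜ) (fun p hp hp' => ?_)
      ((prob_compl_eq_zero_iff measurableSet_Icc).2 hsupp)
    exact absurd (hp'.1.trans hp) (not_le.2 hxa)
  rcases lt_or_ge x b with hxb | hbx
  · rw [min_eq_right hxb.le, hcdf x ⟨hax, hxb⟩]
  · rw [min_eq_left hbx, htotal, ENNReal.ofReal_one]
    exact le_antisymm prob_le_one (hsupp ▸ measure_mono fun p hp => hp.2.trans hbx)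

theorem sub_lt_mul_log_div {a b : ℝ} (ha : 0 < a) (hab : a < b) : b - a < b * log (b / a) := by
  have hb : 0 < b := ha.trans hab
  have h := log_lt_sub_one_of_pos (div_pos ha hb) (div_ne_one_of_ne hab.ne)
  have hlog : log (b / a) = -log (a / b) := by rw [← log_inv, inv_div]
  have : b * (a / b) = a := by field_simp
  nlinarith

noncomputable def logLotteryDensity (p1 p2 p : ℝ) : ℝ :=
  (p2 / p - 1) / (p2 * log (p2 / p1) - (p2 - p1))

noncomputable def logLottery (p1 p2 : ℝ) : Measure ℝ :=
  (volume.restrict (Ioc p1 p2)).withDensity fun p => ENNReal.ofReal (logLotteryDensity p1 p2 p)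

section LogLottery

variable {p1 p2 : ℝ}

theorem logLotteryDensity_nonneg {p : ℝ} (hp1 : 0 < p1) (hp : p ∈ Ioc p1 p2) :
    0 ≤ logLotteryDensity p1 p2 p := by
  have hp0 : 0 < p := hp1.trans hp.1
  have : 1 ≤ p2 / p := (one_le_div hp0).2 hp.2
  exact div_nonneg (by linarith) (sub_nonneg.2 (sub_lt_mul_log_div hp1 (hp.1.trans_le hp.2)).le)

theorem mul_logLotteryDensity {p : ℝ} (hp : p ≠ 0) :
    p * logLotteryDensity p1 p2 p = (p2 - p) / (p2 * log (p2 / p1) - (p2 - p1)) := by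
  rw [logLotteryDensity]; field_simp

theorem intervalIntegral_logLotteryDensity {x : ℝ} (hp1 : 0 < p1) (hx : p1 ≤ x) :
    ∫ p in p1..x, logLotteryDensity p1 p2 p
      = (p2 * log (x / p1) - (x - p1)) / (p2 * log (p2 / p1) - (p2 - p1)) := by
  have hx0 : 0 < x := hp1.trans_le hx
  have hinv : IntervalIntegrable (fun p : ℝ => p2 * p⁻¹) volume p1 x :=
    (intervalIntegral.intervalIntegrable_inv (fun p hp => by
      rw [uIcc_of_le hx] at hp; exact (hp1.trans_le hp.1).ne') continuousOn_id).const_mul p2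
  simp_rw [logLotteryDensity, intervalIntegral.integral_div, div_eq_mul_inv p2]
  rw [intervalIntegral.integral_sub hinv intervalIntegrable_const,
    intervalIntegral.integral_const_mul, integral_inv_of_pos hp1 hx0]
  simp

theorem intervalIntegrable_logLotteryDensity {x : ℝ} (hp1 : 0 < p1) (hx : p1 ≤ x) :
    IntervalIntegrable (logLotteryDensity p1 p2) volume p1 x := by
  refine ContinuousOn.intervalIntegrable fun p hp => ?_
  rw [uIcc_of_le hx] at hp
  have : p ≠ 0 := (hp1.trans_le hp.1).ne'
  unfold logLotteryDensity
  fun_prop (disch := assumption)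

end LogLottery

theorem IsLogLottery.eq_logLottery {A : Measure ℝ} {p1 p2 : ℝ} (hA : IsLogLottery A p1 p2)
    (hp1 : 0 < p1) (hp12 : p1 < p2) : A = logLottery p1 p2 := by
  have := hA.prob
  have hC : 0 < p2 * log (p2 / p1) - (p2 - p1) := sub_pos.2 (sub_lt_mul_log_div hp1 hp12)
  refine eq_withDensity_of_cdf (fun p hp => logLotteryDensity_nonneg hp1 hp)
    (intervalIntegrable_logLotteryDensity hp1 hp12.le).1 hA.supp (fun x hx => ?_) ?_
  · rw [hA.cdf x hx, ← intervalIntegral.integral_of_le hx.1,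
      intervalIntegral_logLotteryDensity hp1 hx.1]
  · rw [← intervalIntegral.integral_of_le hp12.le, intervalIntegral_logLotteryDensity hp1 hp12.le,
      div_self hC.ne']

theorem integral_rev_logLottery (F : Measure ℝ) [IsFiniteMeasure F] {p1 p2 : ℝ} (hp1 : 0 < p1) :
    ∫ p, rev F p ∂logLottery p1 p2
      = (∫ x, (∫ p in Ioc p1 (min p2 x), (p2 - p)) ∂F) / (p2 * log (p2 / p1) - (p2 - p1)) := by
  have hmeas : Measurable fun p => ENNReal.ofReal (logLotteryDensity p1 p2 p) := by
    unfold logLotteryDensity; fun_prop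
  have hint : IntegrableOn (fun p => p2 - p) (Ioc p1 p2) :=
    (continuous_const.sub continuous_id).integrableOn_Ioc
  rw [logLottery, integral_withDensity_eq_integral_toReal_smul hmeas
      (ae_of_all _ fun _ => ENNReal.ofReal_lt_top),
    ← setIntegral_Ioc_mul_measureReal_Ici hint, ← integral_div]
  refine setIntegral_congr_fun measurableSet_Ioc fun p hp => ?_
  rw [ENNReal.toReal_ofReal (logLotteryDensity_nonneg hp1 hp), smul_eq_mul, rev, mul_left_comm,
    ← mul_assoc, mul_logLotteryDensity (hp1.trans hp.1).ne', measureReal_def]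
  ring

theorem le_integral_rev_logLottery {F : Measure ℝ} {m s p1 p2 : ℝ} (hF : MeanVarLe F m s)
    (hp1 : 0 < p1) (hp12 : p1 < p2) (heq1 : p1 * (1 + log (p2 / p1)) = m)
    (heq2 : p1 * (2 * p2 - p1) = m ^ 2 + s ^ 2) :
    p1 ≤ ∫ p, rev F p ∂logLottery p1 p2 := by
  have := hF.prob
  have hC : 0 < p2 * log (p2 / p1) - (p2 - p1) := sub_pos.2 (sub_lt_mul_log_div hp1 hp12)
  have hint : IntegrableOn (fun p => p2 - p) (Ioc p1 p2) :=
    (continuous_const.sub continuous_id).integrableOn_Ioc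
  rw [integral_rev_logLottery F hp1, le_div_iff₀ hC]
  calc p1 * (p2 * log (p2 / p1) - (p2 - p1)) = ((p2 - p1) ^ 2 - (s ^ 2 + (m - p2) ^ 2)) / 2 := by
        linear_combination p2 * heq1 - heq2 / 2
    _ ≤ ∫ x, ((p2 - p1) ^ 2 - (x - p2) ^ 2) / 2 ∂F := by
        rw [integral_div, integral_sub (integrable_const _) (hF.integrable_sub_sq p2),
          integral_const, probReal_univ, one_smul]
        gcongr
        exact hF.integral_sub_sq_le p2
    _ ≤ ∫ x, (∫ p in Ioc p1 (min p2 x), (p2 - p)) ∂F :=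
        integral_mono (((integrable_const _).sub (hF.integrable_sub_sq p2)).div_const 2)
          (integrable_setIntegral_Ioc_min hint) (sq_sub_sq_div_two_le_setIntegral_Ioc_min hp12.le)

namespace IsLogLottery

variable {A F : Measure ℝ} {p1 p2 : ℝ}

theorem mrev_eq_rev (hA : IsLogLottery A p1 p1) : mrev A F = rev F p1 := by
  have := hA.prob
  have hae : ∀ᵐ q ∂A, q ∈ Icc p1 p1 :=
    (ae_mem_iff_measure_eq measurableSet_Icc.nullMeasurableSet).2 (by rw [hA.supp, measure_univ])
  rw [mrev, integral_congr_ae (hae.mono fun q hq => congrArg (rev F) (by simpa using hq))]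
  simp

theorem le_mrev {m s : ℝ} (hA : IsLogLottery A p1 p2) (hF : MeanVarLe F m s) (hp1 : 0 < p1)
    (hp12 : p1 ≤ p2) (heq1 : p1 * (1 + log (p2 / p1)) = m)
    (heq2 : p1 * (2 * p2 - p1) = m ^ 2 + s ^ 2) : p1 ≤ mrev A F := by
  rcases hp12.eq_or_lt with rfl | hlt
  · have hm : p1 = m := by simpa [div_self hp1.ne'] using heq1
    subst hm
    have hs : s = 0 := pow_eq_zero_iff two_ne_zero |>.1 (by nlinarith)
    subst hs
    rw [hA.mrev_eq_rev, rev, hF.measure_Ici_eq_one, ENNReal.toReal_one, mul_one]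
  · rw [mrev, hA.eq_logLottery hp1 hlt]
    exact le_integral_rev_logLottery hF hp1 hlt heq1 heq2

end IsLogLottery

theorem stmt7_general (μ σ : ℝ) (hμ : 0 < μ) (r : ℝ) (hr : r = σ / μ)
    (ρ : ℝ) (hρ1 : 1 ≤ ρ) (hρ2 : (2 * Real.exp (ρ - 1) - 1) / ρ ^ 2 = r ^ 2 + 1)
    (p1 p2 : ℝ) (hp1 : 0 < p1) (hp12 : p1 ≤ p2)
    (heq1 : p1 * (1 + Real.log (p2 / p1)) = μ)
    (heq2 : p1 * (2 * p2 - p1) = μ ^ 2 + σ ^ 2) :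
    p1 = μ / ρ ∧
    ∀ A : Measure ℝ, IsLogLottery A p1 p2 → ∀ F : Measure ℝ, MeanVarLe F μ σ →
      μ / ρ ≤ mrev A F ∧ opt F ≤ ρ * mrev A F := by
  have hρ : ρ = μ / p1 := by
    have hlog : 0 ≤ log (p2 / p1) := log_nonneg ((one_le_div hp1).2 hp12)
    refine strictMonoOn_two_mul_exp_sub_one_div_sq.injOn hρ1 ?_ ?_
    · rw [mem_Ici, ← heq1, mul_div_cancel_left₀ _ hp1.ne']; linarith
    · rw [hρ2, hr, two_mul_exp_sub_one_div_sq_div_eq hμ.ne' hp1 hp12 heq1 heq2]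
  have hp1_eq : p1 = μ / ρ := by rw [hρ, div_div_cancel₀ hμ.ne']
  refine ⟨hp1_eq, fun A hA F hF => ?_⟩
  have hrev : μ / ρ ≤ mrev A F := hp1_eq ▸ hA.le_mrev hF hp1 hp12 heq1 heq2
  refine ⟨hrev, ?_⟩
  calc opt F ≤ μ := hF.opt_le
    _ = ρ * (μ / ρ) := by field_simp
    _ ≤ ρ * mrev A F := by gcongr

/-- Let `μ > 0`, `σ ≥ 0`, `r = σ/μ`, `ρ` the unique solution in `[1,∞)` of
`(2e^{ρ−1}−1)/ρ² = r² + 1`, and `(π₁,π₂)` with `0 < π₁ ≤ π₂` the unique solution of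
`π₁(1 + ln(π₂/π₁)) = μ`, `π₁(2π₂ − π₁) = μ² + σ²`. Then `π₁ = μ/ρ`, and the log-lottery
guarantees `REV(P^log_{μ,σ};F) ≥ μ/ρ` and `OPT(F) ≤ ρ·REV(P^log_{μ,σ};F)` for every
`F ∈ 𝔽_{μ,σ}`. -/
theorem stmt7 (μ σ : ℝ) (hμ : 0 < μ) (hσ : 0 ≤ σ) (r : ℝ) (hr : r = σ / μ)
    (ρ : ℝ) (hρ1 : 1 ≤ ρ) (hρ2 : (2 * Real.exp (ρ - 1) - 1) / ρ ^ 2 = r ^ 2 + 1)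
    (p1 p2 : ℝ) (hp1 : 0 < p1) (hp12 : p1 ≤ p2)
    (heq1 : p1 * (1 + Real.log (p2 / p1)) = μ)
    (heq2 : p1 * (2 * p2 - p1) = μ ^ 2 + σ ^ 2) :
    p1 = μ / ρ ∧
    ∀ A : Measure ℝ, IsLogLottery A p1 p2 → ∀ F : Measure ℝ, MeanVarLe F μ σ →
      μ / ρ ≤ mrev A F ∧ opt F ≤ ρ * mrev A F :=
  stmt7_general μ σ hμ r hr ρ hρ1 hρ2 p1 p2 hp1 hp12 heq1 heq2
end

section
/- Let μ > 0, σ ≥ 0, and let A be the randomized pricing mechanism that posts price μ/2 with probability 1/2 and price μ + σ²/μ with probability 1/2. Then for every two-point mass distribution F with mean μ and variance exactly σ², REV(A;F) ≥ OPT(F)/4. -/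
/-!
For the two-point law `x < y` with weights `α, 1 - α`, the variance identity reads
`σ² = (y - μ)(μ - x)`, and `OPT ≤ max x ((1 - α) y)`. If `x ≥ μ/2`, the price `μ/2` alone
sells surely and earns `μ/2 ≥ OPT/2`. Otherwise `(1 - α) y > μ/2 > x`, the price `μ/2` earns
`(1 - α) μ/2`, and `(μ - x)/μ > 1/2` gives `y ≤ 3μ + 2σ²/μ`; so either the second price
`μ + σ²/μ` is at most `y` and earns `(1 - α)(μ + σ²/μ)`, or it exceeds `y`, which forces `y ≤ μ`.
-/

open MeasureTheory

noncomputable abbrev twoPointMeasure (x y α : ℝ) : Measure ℝ :=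
  ENNReal.ofReal α • Measure.dirac x + ENNReal.ofReal (1 - α) • Measure.dirac y

lemma rev_nonneg (F : Measure ℝ) {p : ℝ} (hp : 0 ≤ p) : 0 ≤ rev F p :=
  mul_nonneg hp ENNReal.toReal_nonneg

lemma mrev_half_dirac_add_half_dirac (F : Measure ℝ) (a b : ℝ) :
    mrev ((2⁻¹ : ENNReal) • Measure.dirac a + (2⁻¹ : ENNReal) • Measure.dirac b) F
      = (rev F a + rev F b) / 2 := by
  have hint (c : ℝ) : Integrable (rev F) ((2⁻¹ : ENNReal) • Measure.dirac c) :=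
    (integrable_dirac enorm_lt_top).smul_measure (by norm_num)
  rw [mrev, integral_add_measure (hint a) (hint b), integral_smul_measure,
    integral_smul_measure, integral_dirac, integral_dirac]
  simp only [ENNReal.toReal_inv, ENNReal.toReal_ofNat, smul_eq_mul]
  ring

section TwoPoint

variable {x y α : ℝ}

lemma rev_twoPointMeasure (hα0 : 0 ≤ α) (hα1 : α ≤ 1) (p : ℝ) :
    rev (twoPointMeasure x y α) p
      = p * ((if p ≤ x then α else 0) + (if p ≤ y then 1 - α else 0)) := by
  rw [rev, Measure.add_apply, Measure.smul_apply, Measure.smul_apply,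
    Measure.dirac_apply, Measure.dirac_apply]
  simp only [Set.indicator, Set.mem_Ici, smul_eq_mul, Pi.one_apply]
  split_ifs <;>
    simp [← ENNReal.ofReal_add hα0 (sub_nonneg.2 hα1), ENNReal.toReal_ofReal hα0,
      ENNReal.toReal_ofReal (sub_nonneg.2 hα1)]

lemma opt_twoPointMeasure_le (hx : 0 ≤ x) (hα0 : 0 ≤ α) (hα1 : α ≤ 1) :
    opt (twoPointMeasure x y α) ≤ max x ((1 - α) * y) := by
  have hM : 0 ≤ max x ((1 - α) * y) := hx.trans (le_max_left _ _)
  refine Real.iSup_le (fun p => Real.iSup_le (fun (hp : 0 ≤ p) => ?_) hM) hM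
  rw [rev_twoPointMeasure hα0 hα1]
  split_ifs with hpx hpy hpy
  · nlinarith [le_max_left x ((1 - α) * y)]
  · nlinarith [le_max_left x ((1 - α) * y)]
  · nlinarith [le_max_right x ((1 - α) * y)]
  · simpa using hM

lemma le_rev_twoPointMeasure (hxy : x ≤ y) (hα0 : 0 ≤ α) (hα1 : α ≤ 1) {p : ℝ}
    (hpx : p ≤ x) : p ≤ rev (twoPointMeasure x y α) p := by
  rw [rev_twoPointMeasure hα0 hα1, if_pos hpx, if_pos (hpx.trans hxy), add_sub_cancel, mul_one]

lemma mul_le_rev_twoPointMeasure (hα0 : 0 ≤ α) (hα1 : α ≤ 1) {p : ℝ} (hp : 0 ≤ p)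
    (hpy : p ≤ y) : (1 - α) * p ≤ rev (twoPointMeasure x y α) p := by
  rw [rev_twoPointMeasure hα0 hα1, if_pos hpy]
  split_ifs <;> nlinarith

variable {μ s : ℝ}

lemma opt_twoPointMeasure_le_of_half_le (hx : 0 ≤ x) (hxy : x ≤ y) (hα0 : 0 ≤ α) (hα1 : α ≤ 1)
    (hmean : α * x + (1 - α) * y = μ) (hxμ : x ≤ μ) (hx2 : μ / 2 ≤ x) :
    opt (twoPointMeasure x y α) ≤ 2 * rev (twoPointMeasure x y α) (μ / 2) := by
  have hopt := opt_twoPointMeasure_le (y := y) hx hα0 hα1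
  have hrev := le_rev_twoPointMeasure hxy hα0 hα1 hx2
  have : max x ((1 - α) * y) ≤ μ := max_le hxμ (by nlinarith)
  linarith

lemma opt_twoPointMeasure_le_of_lt_half (hμ : 0 < μ) (hx : 0 ≤ x) (hα0 : 0 ≤ α) (hα1 : α ≤ 1)
    (hmean : α * x + (1 - α) * y = μ) (hvar : s = (y - μ) * (μ - x)) (hμy : μ ≤ y)
    (hx2 : x < μ / 2) :
    opt (twoPointMeasure x y α) ≤
      2 * rev (twoPointMeasure x y α) (μ / 2) + 2 * rev (twoPointMeasure x y α) (μ + s / μ) := by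
  have hs : 0 ≤ s := by nlinarith
  have hp : 0 ≤ μ + s / μ := by positivity
  have hrev_half :=
    mul_le_rev_twoPointMeasure (x := x) hα0 hα1 (by positivity) (by linarith : μ / 2 ≤ y)
  have hcover : (1 - α) * y ≤ (1 - α) * μ + 2 * rev (twoPointMeasure x y α) (μ + s / μ) := by
    rcases le_or_gt (μ + s / μ) y with hpy | hpy
    · have hy : y - μ ≤ 2 * (s / μ) := by
        rw [mul_div_assoc', le_div_iff₀ hμ]
        nlinarith
      nlinarith [mul_le_rev_twoPointMeasure (x := x) hα0 hα1 hp hpy]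
    · have hy : (y - μ) * μ < s := by
        rw [← lt_div_iff₀ hμ]
        linarith
      nlinarith [rev_nonneg (twoPointMeasure x y α) hp]
  have hopt := opt_twoPointMeasure_le (y := y) hx hα0 hα1
  rw [max_eq_right (by nlinarith)] at hopt
  linarith

end TwoPoint

theorem stmt13_general (μ σ : ℝ) (hμ : 0 < μ) (A : Measure ℝ)
    (hA : A = (2⁻¹ : ENNReal) • Measure.dirac (μ / 2) +
        (2⁻¹ : ENNReal) • Measure.dirac (μ + σ ^ 2 / μ)) :
    ∀ F : Measure ℝ, IsTwoPoint F μ σ → opt F / 4 ≤ mrev A F := by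
  rintro F ⟨x, y, α, hx, hxy, hα0, hα1, hmean, hsq, hF⟩
  obtain rfl : F = twoPointMeasure x y α := hF
  subst hA
  rw [mrev_half_dirac_add_half_dirac]
  have hvar : σ ^ 2 = (y - μ) * (μ - x) := by linear_combination (x + y) * hmean - hsq
  have hxμ : x ≤ μ := by nlinarith
  have hμy : μ ≤ y := by nlinarith
  have hrev_p := rev_nonneg (twoPointMeasure x y α) (by positivity : 0 ≤ μ + σ ^ 2 / μ)
  rcases le_or_gt (μ / 2) x with hx2 | hx2
  · linarith [opt_twoPointMeasure_le_of_half_le hx hxy.le hα0 hα1 hmean hxμ hx2]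
  · linarith [opt_twoPointMeasure_le_of_lt_half hμ hx hα0 hα1 hmean hvar hμy hx2]

/-- Let `μ > 0`, `σ ≥ 0`, and let `A` be the randomized pricing mechanism
posting price `μ/2` with probability `1/2` and price `μ + σ²/μ` with probability `1/2`.
Then `REV(A;F) ≥ OPT(F)/4` for every two-point mass distribution `F` with mean `μ` and
variance exactly `σ²`. -/
theorem stmt13 (μ σ : ℝ) (hμ : 0 < μ) (hσ : 0 ≤ σ) (A : Measure ℝ)
    (hA : A = (2⁻¹ : ENNReal) • Measure.dirac (μ / 2) +
        (2⁻¹ : ENNReal) • Measure.dirac (μ + σ ^ 2 / μ)) :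
    ∀ F : Measure ℝ, IsTwoPoint F μ σ → opt F / 4 ≤ mrev A F :=
  stmt13_general μ σ hμ A hA
end
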